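/- For all real numbers a, b > 0, with g ~ N(0,1) a standard Gaussian: 2a·E[ sech²(a·g + b)·tanh(a·g + b) ] = −E[ g·sech²(a·g + b) ], and this common value is strictly positive. -/

import Mathlib

open MeasureTheory ProbabilityTheory

noncomputable section

/-- Standard Gaussian measure on `ℝ`. -/
def stdGaussian : Measure ℝ := gaussianReal 0 1

/-- The overlap constant `q_{β,h}`, the unique solution in `(0,1]` of the replica-symmetric
fixed point equation (set to `0` for `h = 0`). -/
def qOverlap (β h : ℝ) : ℝ :=
  if h = 0 then 0 else
    sSup {q : ℝ | q ∈ Set.Ioc (0 : ℝ) 1 ∧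
      q = ∫ g, Real.tanh (β * g * Real.sqrt q + h) ^ 2 ∂stdGaussian}

/-- `q₁(β,h) = E tanh(β g √q_{β,h} + h)`. -/
def q1 (β h : ℝ) : ℝ :=
  ∫ g, Real.tanh (β * g * Real.sqrt (qOverlap β h) + h) ∂stdGaussian

/-- Hyperbolic secant. -/
def sech (x : ℝ) : ℝ := 1 / Real.cosh x

/-- The Almeida–Thouless condition for `(β,h)`. -/
def ATCond (β h : ℝ) : Prop :=
  β ^ 2 * ∫ g, sech (β * g * Real.sqrt (qOverlap β h) + h) ^ 4 ∂stdGaussian < 1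

/-- The AT condition with gap at least `g0`. -/
def ATgap (β h g0 : ℝ) : Prop :=
  β ^ 2 * ∫ g, sech (β * g * Real.sqrt (qOverlap β h) + h) ^ 4 ∂stdGaussian ≤ 1 - g0

/-- The one-dimensional RGD/AMP update map `f_{β,λ}`. -/
def fbl (β lam z : ℝ) : ℝ :=
  ∫ g, Real.tanh (β * g * Real.sqrt (qOverlap β (β * lam * z)) + β * lam * z) ∂stdGaussian

/-- `h_* = inf{h ≥ 0 : (β,h) satisfies AT}`. -/
def hStar (β : ℝ) : ℝ := sInf {h : ℝ | 0 ≤ h ∧ ATCond β h}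

/-!
Gaussian integration by parts (Stein's lemma) applied to `f x = sech (a x + b) ^ 2`, whose
derivative is `-2 a sech² (a x + b) tanh (a x + b)`, gives the identity. For positivity,
`a g + b` has law `N(b, a²)` and `sech² · tanh` is odd and positive on `(0, ∞)`; pairing `x`
with `-x`, the Gaussian density with positive mean is larger at `x` than at `-x` for `x > 0`.
-/

open Real
open scoped NNReal

namespace ProbabilityTheory

lemma integrable_gaussianReal_iff {E : Type*} [NormedAddCommGroup E] [NormedSpace ℝ E]
    {μ : ℝ} {v : ℝ≥0} (hv : v ≠ 0) {f : ℝ → E} :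
    Integrable f (gaussianReal μ v) ↔ Integrable (fun x => gaussianPDFReal μ v x • f x) := by
  rw [gaussianReal_of_var_ne_zero _ hv, integrable_withDensity_iff_integrable_smul'
    (measurable_gaussianPDF μ v) (ae_of_all _ fun _ => gaussianPDF_lt_top)]
  simp only [toReal_gaussianPDF]

lemma hasDerivAt_gaussianPDFReal (μ : ℝ) (v : ℝ≥0) (x : ℝ) :
    HasDerivAt (gaussianPDFReal μ v) (-((x - μ) / v) * gaussianPDFReal μ v x) x := by
  rw [gaussianPDFReal_def]
  have h : HasDerivAt (fun x => -(x - μ) ^ 2 / (2 * v)) (-((x - μ) / v)) x := by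
    refine (((hasDerivAt_id' x).sub_const μ).fun_pow 2).neg.div_const (2 * (v : ℝ))
      |>.congr_deriv ?_
    field_simp
    ring
  exact (h.exp.const_mul (√(2 * π * v))⁻¹).congr_deriv (by ring)

lemma gaussianPDFReal_neg_lt {μ : ℝ} {v : ℝ≥0} (hμ : 0 < μ) (hv : v ≠ 0) {x : ℝ}
    (hx : 0 < x) :
    gaussianPDFReal μ v (-x) < gaussianPDFReal μ v x := by
  have hv' : (0 : ℝ) < v := by positivity
  simp only [gaussianPDFReal_def]
  gcongr (√(2 * π * v))⁻¹ * rexp ?_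
  rw [div_lt_div_iff_of_pos_right (by positivity)]
  nlinarith

theorem integral_sub_mul_gaussianReal_eq_mul_integral_deriv {μ : ℝ} {v : ℝ≥0} (hv : v ≠ 0)
    {f f' : ℝ → ℝ} (hf : ∀ x, HasDerivAt f (f' x) x)
    (hfi : Integrable f (gaussianReal μ v))
    (hxf : Integrable (fun x => (x - μ) * f x) (gaussianReal μ v))
    (hf' : Integrable f' (gaussianReal μ v)) :
    ∫ x, (x - μ) * f x ∂gaussianReal μ v = v * ∫ x, f' x ∂gaussianReal μ v := by
  rw [integrable_gaussianReal_iff hv] at hfi hxf hf'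
  rw [integral_gaussianReal_eq_integral_smul hv, integral_gaussianReal_eq_integral_smul hv]
  simp only [smul_eq_mul] at hfi hxf hf' ⊢
  have hv' : (v : ℝ) ≠ 0 := by exact_mod_cast hv
  have hibp := integral_mul_deriv_eq_deriv_mul_of_integrable (fun x _ => hf x)
    (fun x _ => hasDerivAt_gaussianPDFReal μ v x)
    ((hxf.const_mul (-(v : ℝ)⁻¹)).congr
      (ae_of_all _ fun x => by simp only [Pi.mul_apply]; field_simp))
    (hf'.congr (ae_of_all _ fun x => by simp only [Pi.mul_apply]; ring))
    (hfi.congr (ae_of_all _ fun x => by simp only [Pi.mul_apply]; ring))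
  calc ∫ x, gaussianPDFReal μ v x * ((x - μ) * f x)
      = -v * ∫ x, f x * (-((x - μ) / v) * gaussianPDFReal μ v x) := by
        rw [← integral_const_mul]; congr with x; field_simp
    _ = v * ∫ x, gaussianPDFReal μ v x * f' x := by
        rw [hibp]; simp_rw [mul_comm (f' _)]; ring

theorem integral_gaussianReal_pos_of_odd {μ : ℝ} {v : ℝ≥0} (hμ : 0 < μ) (hv : v ≠ 0)
    {φ : ℝ → ℝ} (hodd : ∀ x, φ (-x) = -φ x) (hpos : ∀ x, 0 < x → 0 < φ x)
    (hi : Integrable φ (gaussianReal μ v)) :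
    0 < ∫ x, φ x ∂gaussianReal μ v := by
  set p := gaussianPDFReal μ v
  rw [integrable_gaussianReal_iff hv] at hi
  rw [integral_gaussianReal_eq_integral_smul hv]
  set ψ := fun x => p x • φ x
  have hsymm : ∀ x, ψ x + ψ (-x) = φ x * (p x - p (-x)) := fun x => by
    simp only [ψ, smul_eq_mul, hodd]; ring
  have hpair_pos : ∀ x, 0 < x → 0 < ψ x + ψ (-x) := fun x hx => by
    rw [hsymm]; exact mul_pos (hpos x hx) (sub_pos.2 (gaussianPDFReal_neg_lt hμ hv hx))
  have hpair_nonneg : ∀ x, 0 ≤ ψ x + ψ (-x) := fun x => by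
    rcases lt_trichotomy x 0 with hx | rfl | hx
    · simpa [add_comm] using (hpair_pos (-x) (neg_pos.2 hx)).le
    · have h0 : φ 0 = 0 := by linarith [neg_zero (G := ℝ) ▸ hodd 0]
      simp [ψ, h0]
    · exact (hpair_pos x hx).le
  have htwice : ∫ x, ψ x + ψ (-x) = 2 * ∫ x, ψ x := by
    rw [integral_add hi hi.comp_neg, integral_neg_eq_self ψ]; ring
  have hpair_int_pos : 0 < ∫ x, ψ x + ψ (-x) := by
    rw [integral_pos_iff_support_of_nonneg hpair_nonneg (hi.add hi.comp_neg)]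
    calc (0 : ENNReal) < volume (Set.Ioi (0 : ℝ)) := by simp
      _ ≤ _ := measure_mono fun x hx => (hpair_pos x hx).ne'
  linarith

end ProbabilityTheory

namespace Real

@[fun_prop]
lemma continuous_tanh : Continuous tanh := by
  simp only [funext tanh_eq_sinh_div_cosh]
  exact continuous_sinh.div continuous_cosh fun x => (cosh_pos x).ne'

lemma tanh_pos {x : ℝ} (hx : 0 < x) : 0 < tanh x := by
  rw [tanh_eq_sinh_div_cosh]
  exact div_pos (sinh_pos_iff.2 hx) (cosh_pos x)

end Real

lemma sech_pos (x : ℝ) : 0 < sech x := by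
  unfold sech; positivity

lemma sech_le_one (x : ℝ) : sech x ≤ 1 := by
  unfold sech
  rw [div_le_one (cosh_pos x)]
  exact one_le_cosh x

lemma sech_neg (x : ℝ) : sech (-x) = sech x := by
  simp [sech]

@[fun_prop]
lemma continuous_sech : Continuous sech := by
  unfold sech
  exact continuous_const.div continuous_cosh fun x => (cosh_pos x).ne'

lemma hasDerivAt_sech_sq (x : ℝ) :
    HasDerivAt (fun x => sech x ^ 2) (-2 * (sech x ^ 2 * tanh x)) x := by
  simp only [sech, one_div]
  refine (((hasDerivAt_cosh x).inv (cosh_pos x).ne').pow 2).congr_deriv ?_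
  norm_num [tanh_eq_sinh_div_cosh]
  field_simp

lemma abs_sech_sq_le_one (x : ℝ) : |sech x ^ 2| ≤ 1 := by
  rw [abs_of_pos (by have := sech_pos x; positivity)]
  exact pow_le_one₀ (sech_pos x).le (sech_le_one x)

lemma abs_sech_sq_mul_tanh_le_one (x : ℝ) : |sech x ^ 2 * tanh x| ≤ 1 := by
  rw [abs_mul]
  exact mul_le_one₀ (abs_sech_sq_le_one x) (abs_nonneg _) (abs_tanh_lt_one x).le

lemma sech_sq_mul_tanh_neg (x : ℝ) : sech (-x) ^ 2 * tanh (-x) = -(sech x ^ 2 * tanh x) := by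
  rw [sech_neg, tanh_neg, mul_neg]

lemma sech_sq_mul_tanh_pos {x : ℝ} (hx : 0 < x) : 0 < sech x ^ 2 * tanh x := by
  have := sech_pos x
  have := tanh_pos hx
  positivity

lemma hasDerivAt_sech_sq_comp_affine (a b x : ℝ) :
    HasDerivAt (fun x => sech (a * x + b) ^ 2)
      (a * (-2 * (sech (a * x + b) ^ 2 * tanh (a * x + b)))) x :=
  ((hasDerivAt_sech_sq _).comp x (((hasDerivAt_id x).const_mul a).add_const b)).congr_deriv
    (by simp only [id]; ring)

lemma integral_mul_sech_sq_gaussianReal (a b : ℝ) :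
    ∫ x, x * sech (a * x + b) ^ 2 ∂gaussianReal 0 1
      = -(2 * a * ∫ x, sech (a * x + b) ^ 2 * tanh (a * x + b) ∂gaussianReal 0 1) := by
  have hS : Integrable (fun x => sech (a * x + b) ^ 2) (gaussianReal 0 1) :=
    .of_bound (by fun_prop : Continuous _).aestronglyMeasurable 1
      (ae_of_all _ fun _ => abs_sech_sq_le_one _)
  have hT : Integrable (fun x => sech (a * x + b) ^ 2 * tanh (a * x + b)) (gaussianReal 0 1) :=
    .of_bound (by fun_prop : Continuous _).aestronglyMeasurable 1
      (ae_of_all _ fun _ => abs_sech_sq_mul_tanh_le_one _)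
  have hxS : Integrable (fun x => (x - 0) * sech (a * x + b) ^ 2) (gaussianReal 0 1) := by
    simpa using ((memLp_id_gaussianReal 1).integrable le_rfl).mul_bdd
      (by fun_prop : Continuous _).aestronglyMeasurable
      (ae_of_all _ fun x => abs_sech_sq_le_one (a * x + b))
  have hstein := integral_sub_mul_gaussianReal_eq_mul_integral_deriv one_ne_zero
    (hasDerivAt_sech_sq_comp_affine a b) hS hxS
    ((hT.const_mul (-2)).const_mul a)
  simp only [sub_zero, NNReal.coe_one, one_mul, integral_const_mul] at hstein
  linarith

lemma integral_sech_sq_mul_tanh_gaussianReal_pos {a b : ℝ} (ha : 0 < a) (hb : 0 < b) :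
    0 < ∫ x, sech (a * x + b) ^ 2 * tanh (a * x + b) ∂gaussianReal 0 1 := by
  have hlaw := gaussianReal_add_const
    (gaussianReal_const_mul (HasLaw.id (μ := gaussianReal 0 1)) a) b
  rw [mul_zero, zero_add] at hlaw
  have hi : Integrable (fun y => sech y ^ 2 * tanh y)
      (gaussianReal b (.mk (a ^ 2) (sq_nonneg a) * 1)) :=
    .of_bound (by fun_prop : Continuous _).aestronglyMeasurable 1
      (ae_of_all _ abs_sech_sq_mul_tanh_le_one)
  have hcomp := hlaw.integral_comp hi.aestronglyMeasurable
  simp only [Function.comp_def, id] at hcomp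
  rw [hcomp]
  exact integral_gaussianReal_pos_of_odd hb (by simpa [← NNReal.coe_eq_zero] using ha.ne')
    sech_sq_mul_tanh_neg (fun _ => sech_sq_mul_tanh_pos) hi

/-- For `a, b > 0`, with `g ~ N(0,1)`,
`2a · E[sech²(ag+b) tanh(ag+b)] = −E[g · sech²(ag+b)]`, and this common value is
strictly positive. -/
theorem stmt12 (a b : ℝ) (ha : 0 < a) (hb : 0 < b) :
    2 * a * (∫ g, sech (a * g + b) ^ 2 * Real.tanh (a * g + b) ∂stdGaussian)
        = -∫ g, g * sech (a * g + b) ^ 2 ∂stdGaussian ∧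
    0 < 2 * a * (∫ g, sech (a * g + b) ^ 2 * Real.tanh (a * g + b) ∂stdGaussian) := by
  unfold _root_.stdGaussian -- Mathlib's `ProbabilityTheory.stdGaussian` is a different measure
  rw [integral_mul_sech_sq_gaussianReal, neg_neg]
  exact ⟨rfl, mul_pos (by positivity) (integral_sech_sq_mul_tanh_gaussianReal_pos ha hb)⟩
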